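/- arXiv:2009.00778 — 7 statements merged into one kernel-verified Lean document; each statement's English description precedes it below -/
import Mathlib

section
/- Assume in addition that V is 4-dimensional and −1 < p < 1. Then for every unit vector Z ∈ V, the four vectors Z, IZ, JZ, KZ form a basis of V. -/
open scoped RealInnerProductSpace

/-!
For a unit vector `Z`, the Gram matrix of `Z, IZ, JZ, KZ` is block diagonal,
`diag(1, [[1, p], [p, 1]], 1 - p²)`: the isometries `I, J` are skew-adjoint, and the anticommutation
relation gives `⟪IZ, JZ⟫ = p` and `KZ = IJZ + pZ`. Its determinant `(1 - p²)²` is nonzero for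
`|p| < 1`, so the four vectors are independent, hence a basis of the 4-dimensional space `V`.
-/

section

variable {V : Type*} [NormedAddCommGroup V] [InnerProductSpace ℝ V]

structure IsOrthogonalComplexStructure (I : Module.End ℝ V) : Prop where
  inner_map_map : ∀ u v : V, ⟪I u, I v⟫ = ⟪u, v⟫
  mul_self : I * I = -1

namespace IsOrthogonalComplexStructure

variable {I : Module.End ℝ V} (hI : IsOrthogonalComplexStructure I)
include hI

theorem map_map (v : V) : I (I v) = -v := by
  simpa using LinearMap.congr_fun hI.mul_self v

theorem inner_map_left (u v : V) : ⟪I u, v⟫ = -⟪u, I v⟫ := by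
  rw [← hI.inner_map_map, hI.map_map, inner_neg_left]

theorem inner_self_map (v : V) : ⟪v, I v⟫ = 0 := by
  have h := hI.inner_map_left v v
  rw [real_inner_comm] at h
  linarith

end IsOrthogonalComplexStructure

section Frame

variable {I J K : Module.End ℝ V} {p : ℝ}
  (hI : IsOrthogonalComplexStructure I) (hJ : IsOrthogonalComplexStructure J)
  (hIJ : I * J + J * I = (-(2 * p)) • (1 : Module.End ℝ V))
  (hK : K = (1 / 2 : ℝ) • (I * J - J * I))

include hIJ in
theorem anticomm_apply (v : V) : I (J v) + J (I v) = (-(2 * p)) • v := by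
  simpa using LinearMap.congr_fun hIJ v

include hIJ hK in
theorem halfComm_apply (v : V) : K v = I (J v) + p • v := by
  have hJI : J (I v) = (-(2 * p)) • v - I (J v) := eq_sub_of_add_eq' (anticomm_apply hIJ v)
  rw [hK]
  simp only [LinearMap.smul_apply, LinearMap.sub_apply, Module.End.mul_apply, hJI]
  module

include hI hJ hIJ in
theorem inner_left_map_right_map (v : V) : ⟪I v, J v⟫ = p * ⟪v, v⟫ := by
  have hsum : ⟪v, I (J v) + J (I v)⟫ = -(2 * p) * ⟪v, v⟫ := by
    rw [anticomm_apply hIJ, real_inner_smul_right]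
  have h₁ := hI.inner_map_left v (J v)
  have h₂ := hJ.inner_map_left (I v) v
  rw [inner_add_right] at hsum
  linarith [real_inner_comm v (J (I v)), real_inner_comm (I v) (J v)]

include hI hJ hIJ hK

theorem inner_self_halfComm (v : V) : ⟪v, K v⟫ = 0 := by
  rw [halfComm_apply hIJ hK, inner_add_right, real_inner_smul_right,
    ← neg_eq_iff_eq_neg.mpr (hI.inner_map_left v (J v)), inner_left_map_right_map hI hJ hIJ]
  ring

theorem inner_left_map_halfComm (v : V) : ⟪I v, K v⟫ = 0 := by
  rw [halfComm_apply hIJ hK, inner_add_right, real_inner_smul_right,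
    hI.inner_map_map, hJ.inner_self_map, real_inner_comm, hI.inner_self_map]
  ring

theorem inner_right_map_halfComm (v : V) : ⟪J v, K v⟫ = 0 := by
  rw [halfComm_apply hIJ hK, inner_add_right, real_inner_smul_right,
    hI.inner_self_map, real_inner_comm, hJ.inner_self_map]
  ring

theorem inner_halfComm_halfComm (v : V) : ⟪K v, K v⟫ = (1 - p ^ 2) * ⟪v, v⟫ := by
  have hIJv : ⟪v, I (J v)⟫ = -(p * ⟪v, v⟫) := by
    rw [← inner_left_map_right_map hI hJ hIJ, hI.inner_map_left, neg_neg]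
  simp only [halfComm_apply hIJ hK, inner_add_left, inner_add_right,
    real_inner_smul_left, real_inner_smul_right, hI.inner_map_map, hJ.inner_map_map,
    real_inner_comm v (I (J v)), hIJv]
  ring

theorem gram_frame (v : V) :
    Matrix.gram ℝ ![v, I v, J v, K v] =
      ⟪v, v⟫ • !![1, 0, 0, 0; 0, 1, p, 0; 0, p, 1, 0; 0, 0, 0, 1 - p ^ 2] := by
  -- entries below the diagonal, by symmetry of the inner product
  have hvI := hI.inner_self_map v
  have hvJ := hJ.inner_self_map v
  have hIJv := inner_left_map_right_map hI hJ hIJ v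
  have hvK := inner_self_halfComm hI hJ hIJ hK v
  have hIK := inner_left_map_halfComm hI hJ hIJ hK v
  have hJK := inner_right_map_halfComm hI hJ hIJ hK v
  rw [real_inner_comm] at hvI hvJ hIJv hvK hIK hJK
  ext i j
  fin_cases i <;> fin_cases j <;>
    simp [-inner_self_eq_norm_sq_to_K, hI.inner_self_map, hJ.inner_self_map,
      hI.inner_map_map, hJ.inner_map_map, inner_left_map_right_map hI hJ hIJ, inner_self_halfComm hI hJ hIJ hK,
      inner_left_map_halfComm hI hJ hIJ hK, inner_right_map_halfComm hI hJ hIJ hK,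
      inner_halfComm_halfComm hI hJ hIJ hK, hvI, hvJ, hIJv, hvK, hIK, hJK] <;>
    ring

theorem linearIndependent_frame {v : V} (hv : v ≠ 0) (hp : p ^ 2 ≠ 1) :
    LinearIndependent ℝ ![v, I v, J v, K v] := by
  apply Matrix.linearIndependent_of_det_gram_ne_zero
  have hdet : (!![1, 0, 0, 0; 0, 1, p, 0; 0, p, 1, 0; 0, 0, 0, 1 - p ^ 2] :
      Matrix (Fin 4) (Fin 4) ℝ).det = (1 - p ^ 2) ^ 2 := by
    simp [Matrix.det_succ_row_zero, Fin.sum_univ_succ]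
    ring
  rw [gram_frame hI hJ hIJ hK, Matrix.det_smul, hdet]
  exact mul_ne_zero (pow_ne_zero _ (inner_self_ne_zero.mpr hv))
    (pow_ne_zero _ (sub_ne_zero.mpr (Ne.symm hp)))

end Frame

end

theorem gk_frame_basis_general {V : Type*} [NormedAddCommGroup V] [InnerProductSpace ℝ V]
    (hdim : Module.finrank ℝ V = 4)
    (p : ℝ) (hp1 : -1 < p) (hp2 : p < 1) (I J K : Module.End ℝ V)
    (hIiso : ∀ u v : V, ⟪I u, I v⟫ = ⟪u, v⟫)
    (hJiso : ∀ u v : V, ⟪J u, J v⟫ = ⟪u, v⟫)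
    (hI : I * I = -1) (hJ : J * J = -1)
    (hIJ : I * J + J * I = (-(2 * p)) • (1 : Module.End ℝ V))
    (hK : K = (1 / 2 : ℝ) • (I * J - J * I)) :
    ∀ Z : V, ‖Z‖ = 1 →
      LinearIndependent ℝ ![Z, I Z, J Z, K Z] ∧
      Submodule.span ℝ (Set.range ![Z, I Z, J Z, K Z]) = ⊤ := by
  intro Z hZ
  have hZ0 : Z ≠ 0 := norm_ne_zero_iff.mp (hZ ▸ one_ne_zero)
  have hp : p ^ 2 ≠ 1 := by nlinarith
  have hli := linearIndependent_frame ⟨hIiso, hI⟩ ⟨hJiso, hJ⟩ hIJ hK hZ0 hp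
  exact ⟨hli, hli.span_eq_top_of_card_eq_finrank (by simp [hdim])⟩

/-- If in addition `V` is 4-dimensional and `-1 < p < 1`, then for every
unit vector `Z`, the four vectors `Z, IZ, JZ, KZ` form a basis of `V`. -/
theorem gk_frame_basis {V : Type*} [NormedAddCommGroup V] [InnerProductSpace ℝ V]
    [FiniteDimensional ℝ V] (hdim : Module.finrank ℝ V = 4)
    (p : ℝ) (hp1 : -1 < p) (hp2 : p < 1) (I J K : Module.End ℝ V)
    (hIiso : ∀ u v : V, ⟪I u, I v⟫ = ⟪u, v⟫)
    (hJiso : ∀ u v : V, ⟪J u, J v⟫ = ⟪u, v⟫)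
    (hI : I * I = -1) (hJ : J * J = -1)
    (hIJ : I * J + J * I = (-(2 * p)) • (1 : Module.End ℝ V))
    (hK : K = (1 / 2 : ℝ) • (I * J - J * I)) :
    ∀ Z : V, ‖Z‖ = 1 →
      LinearIndependent ℝ ![Z, I Z, J Z, K Z] ∧
      Submodule.span ℝ (Set.range ![Z, I Z, J Z, K Z]) = ⊤ :=
  gk_frame_basis_general hdim p hp1 hp2 I J K hIiso hJiso hI hJ hIJ hK
end

section
/- Assume in addition p² ≠ 1, and define the bilinear form Ω(u, v) := (p² − 1)⁻¹ ⟨Ku, v⟩ on V. Then K is skew-adjoint (⟨Ku, v⟩ = −⟨u, Kv⟩ for all u, v), so Ω is alternating, and for every unit vector Z ∈ V: Ω(Z, KZ) = −1, Ω(IZ, JZ) = −1, and Ω(Z, IZ) = Ω(Z, JZ) = Ω(IZ, KZ) = Ω(JZ, KZ) = 0. (This is the matrix of the symplectic form Ω = (K⁻¹)ᵗ·g in the frame (Z, IZ, JZ, KZ) from Proposition 2.4.) -/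
/-! The relation `IJ + JI = -2p` turns `K = ½[I, J]` into `IJ + p`, which gives the relations
`KI = J - pI`, `KJ = pJ - I` and `K² = p² - 1` in any real algebra. Orthogonal complex structures
are skew-adjoint, hence so is their commutator `K`, and `⟪Iu, Ju⟫ = p‖u‖²`. Every entry of `Ω` in
the frame `(Z, IZ, JZ, KZ)` follows by moving one `K` across the inner product. -/

open scoped RealInnerProductSpace

noncomputable def halfCommutator {R : Type*} [Ring R] [Algebra ℝ R] (I J : R) : R :=
  (1 / 2 : ℝ) • (I * J - J * I)

section Relations

variable {R : Type*} [Ring R] [Algebra ℝ R] {p : ℝ} {I J : R}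

theorem halfCommutator_eq_mul_add_smul_one (hIJ : I * J + J * I = (-(2 * p)) • (1 : R)) :
    halfCommutator I J = I * J + p • 1 := by
  rw [halfCommutator, eq_sub_of_add_eq' hIJ]
  module

theorem halfCommutator_mul_left (hI : I * I = -1) (hIJ : I * J + J * I = (-(2 * p)) • (1 : R)) :
    halfCommutator I J * I = J - p • I := by
  rw [halfCommutator_eq_mul_add_smul_one hIJ, add_mul, mul_assoc, eq_sub_of_add_eq' hIJ, mul_sub,
    ← mul_assoc, hI, mul_smul_comm, smul_mul_assoc, mul_one, one_mul, neg_one_mul]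
  module

theorem halfCommutator_mul_right (hJ : J * J = -1) (hIJ : I * J + J * I = (-(2 * p)) • (1 : R)) :
    halfCommutator I J * J = p • J - I := by
  rw [halfCommutator_eq_mul_add_smul_one hIJ, add_mul, mul_assoc, hJ, smul_mul_assoc, mul_neg_one,
    one_mul]
  module

theorem halfCommutator_mul_self (hI : I * I = -1) (hJ : J * J = -1)
    (hIJ : I * J + J * I = (-(2 * p)) • (1 : R)) :
    halfCommutator I J * halfCommutator I J = (p ^ 2 - 1) • 1 := by
  nth_rw 2 [halfCommutator_eq_mul_add_smul_one hIJ]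
  rw [mul_add, ← mul_assoc, halfCommutator_mul_left hI hIJ, mul_smul_comm, mul_one,
    halfCommutator_eq_mul_add_smul_one hIJ, sub_mul, hJ, smul_mul_assoc]
  module

end Relations

section SkewMaps

variable {V : Type*} [NormedAddCommGroup V] [InnerProductSpace ℝ V] {T S : Module.End ℝ V}

theorem inner_map_left_eq_neg_of_mul_self_eq_neg_one (hT : ∀ u v : V, ⟪T u, T v⟫ = ⟪u, v⟫)
    (hTT : T * T = -1) (u v : V) : ⟪T u, v⟫ = -⟪u, T v⟫ := by
  rw [← hT, ← Module.End.mul_apply, hTT]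
  simp

theorem inner_map_self_eq_zero_of_skew (hT : ∀ u v : V, ⟪T u, v⟫ = -⟪u, T v⟫) (u : V) :
    ⟪T u, u⟫ = 0 := by
  linarith [hT u u, real_inner_comm (T u) u]

theorem halfCommutator_skew (hT : ∀ u v : V, ⟪T u, v⟫ = -⟪u, T v⟫)
    (hS : ∀ u v : V, ⟪S u, v⟫ = -⟪u, S v⟫) (u v : V) :
    ⟪halfCommutator T S u, v⟫ = -⟪u, halfCommutator T S v⟫ := by
  simp only [halfCommutator, LinearMap.smul_apply, LinearMap.sub_apply, Module.End.mul_apply,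
    real_inner_smul_left, real_inner_smul_right, inner_sub_left, inner_sub_right, hT, hS]
  ring

theorem inner_map_map_self_eq_of_anticommutator (hT : ∀ u v : V, ⟪T u, v⟫ = -⟪u, T v⟫)
    (hS : ∀ u v : V, ⟪S u, v⟫ = -⟪u, S v⟫) {p : ℝ} (hTS : T * S + S * T = (-(2 * p)) • 1)
    (u : V) : ⟪T u, S u⟫ = p * ⟪u, u⟫ := by
  have hsum : ⟪u, T (S u)⟫ + ⟪u, S (T u)⟫ = -(2 * p) * ⟪u, u⟫ := by
    rw [← inner_add_right, ← Module.End.mul_apply, ← Module.End.mul_apply, ← LinearMap.add_apply,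
      hTS]
    simp [real_inner_smul_right]
  linarith [hT u (S u), hS u (T u), real_inner_comm (T u) (S u)]

theorem inner_map_map_eq_of_mul_self_eq_smul_one (hT : ∀ u v : V, ⟪T u, v⟫ = -⟪u, T v⟫) {c : ℝ}
    (hTT : T * T = c • 1) (u v : V) : ⟪T u, T v⟫ = -c * ⟪u, v⟫ := by
  rw [hT, ← Module.End.mul_apply, hTT, LinearMap.smul_apply, Module.End.one_apply,
    real_inner_smul_right, neg_mul]

end SkewMaps

/-- With `p² ≠ 1` and `Ω(u,v) := (p² - 1)⁻¹ ⟨Ku, v⟩`: `K` is skew-adjoint,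
so `Ω` is alternating, and the matrix of the symplectic form `Ω = (K⁻¹)ᵗ·g` in the frame
`(Z, IZ, JZ, KZ)` for a unit vector `Z` is as in Proposition 2.4. -/
theorem gk_symplectic_matrix {V : Type*} [NormedAddCommGroup V] [InnerProductSpace ℝ V]
    (p : ℝ) (hp : p ^ 2 ≠ 1) (I J K : Module.End ℝ V)
    (hIiso : ∀ u v : V, ⟪I u, I v⟫ = ⟪u, v⟫)
    (hJiso : ∀ u v : V, ⟪J u, J v⟫ = ⟪u, v⟫)
    (hI : I * I = -1) (hJ : J * J = -1)
    (hIJ : I * J + J * I = (-(2 * p)) • (1 : Module.End ℝ V))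
    (hK : K = (1 / 2 : ℝ) • (I * J - J * I))
    (Ω : V → V → ℝ) (hΩ : ∀ u v : V, Ω u v = (p ^ 2 - 1)⁻¹ * ⟪K u, v⟫) :
    (∀ u v : V, ⟪K u, v⟫ = -⟪u, K v⟫) ∧
    (∀ u : V, Ω u u = 0) ∧
    (∀ Z : V, ‖Z‖ = 1 →
      Ω Z (K Z) = -1 ∧ Ω (I Z) (J Z) = -1 ∧
      Ω Z (I Z) = 0 ∧ Ω Z (J Z) = 0 ∧ Ω (I Z) (K Z) = 0 ∧ Ω (J Z) (K Z) = 0) := by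
  obtain rfl : K = halfCommutator I J := hK
  have hIskew := inner_map_left_eq_neg_of_mul_self_eq_neg_one hIiso hI
  have hJskew := inner_map_left_eq_neg_of_mul_self_eq_neg_one hJiso hJ
  have hKskew := halfCommutator_skew hIskew hJskew
  have hKI (u : V) : halfCommutator I J (I u) = J u - p • I u :=
    LinearMap.congr_fun (halfCommutator_mul_left hI hIJ) u
  have hKJ (u : V) : halfCommutator I J (J u) = p • J u - I u :=
    LinearMap.congr_fun (halfCommutator_mul_right hJ hIJ) u
  have hc : p ^ 2 - 1 ≠ 0 := sub_ne_zero.mpr hp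
  have hΩK (u v : V) : Ω u (halfCommutator I J v) = -⟪u, v⟫ := by
    rw [hΩ, inner_map_map_eq_of_mul_self_eq_smul_one hKskew (halfCommutator_mul_self hI hJ hIJ)]
    field_simp
  refine ⟨hKskew, fun u ↦ by rw [hΩ, inner_map_self_eq_zero_of_skew hKskew, mul_zero],
    fun Z hZ ↦ ?_⟩
  have hZZ : ⟪Z, Z⟫ = 1 := by rw [real_inner_self_eq_norm_sq, hZ, one_pow]
  have hIZ := inner_map_self_eq_zero_of_skew hIskew Z
  have hJZ := inner_map_self_eq_zero_of_skew hJskew Z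
  refine ⟨by rw [hΩK, hZZ], ?_, ?_, ?_, by rw [hΩK, hIZ, neg_zero], by rw [hΩK, hJZ, neg_zero]⟩
  · rw [hΩ, hKI, inner_sub_left, real_inner_smul_left, hJiso, hZZ,
      inner_map_map_self_eq_of_anticommutator hIskew hJskew hIJ, hZZ]
    field_simp
    ring
  · rw [hΩ, hKskew, hKI, inner_sub_right, real_inner_smul_right, real_inner_comm (I Z),
      real_inner_comm (J Z), hIZ, hJZ]
    ring
  · rw [hΩ, hKskew, hKJ, inner_sub_right, real_inner_smul_right, real_inner_comm (I Z),
      real_inner_comm (J Z), hIZ, hJZ]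
    ring
end

section
/- The baseline function W̃ satisfies the linear elliptic equation W̃₁₁ + (1/2)·((1+p)·W̃)₊₊ + (1/2)·((1−p)·W̃)₋₋ = 0 at every point of ℝ³. (Lemma 5.1 of the paper: the explicit baseline solution of the Gibbons–Hawking equation for rank one generalized Kähler–Ricci solitons.) -/
/-!
Put `e = exp Φ`. Then `1 + p = 2 / (1 + e)` and `1 - p = 2e / (1 + e)`, so `W̃`, `(1 + p) W̃` and
`(1 - p) W̃` are functions of the linear form `Φ` alone; the last two are
`F = (a₊² + a₋² e)⁻¹` and `G = e F`. Along coordinate directions, the second derivative of a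
function of `Φ` is the coefficient of `Φ` squared times its second derivative, so the
`μ₁`-term vanishes and the equation reduces to `a₊² F'' + a₋² G'' = 0`, the second derivative
of the identity `a₊² F + a₋² G = 1`.
-/

/-- Partial derivative in the `i`-th coordinate direction of a function on `ℝ³`
(coordinates `μ₁ = x 0`, `μ₊ = x 1`, `μ₋ = x 2`). -/
noncomputable def pd3 (i : Fin 3) (F : (Fin 3 → ℝ) → ℝ) (x : Fin 3 → ℝ) : ℝ :=
  deriv (fun t => F (Function.update x i t)) (x i)

open Real

-- Holds for every `f`, differentiable or not, since `deriv_comp_mul_left` is unconditional.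
theorem pd3_comp_linearMap (ℓ : (Fin 3 → ℝ) →ₗ[ℝ] ℝ) (f : ℝ → ℝ) (i : Fin 3)
    (x : Fin 3 → ℝ) : pd3 i (fun y => f (ℓ y)) x = ℓ (Pi.single i 1) * deriv f (ℓ x) := by
  set c := ℓ (Pi.single i 1)
  have hline : ∀ t, ℓ (Function.update x i t) = ℓ (x - Pi.single i (x i)) + c * t := by
    intro t
    rw [Pi.update_eq_sub_add_single, map_add,
      show (Pi.single i t : Fin 3 → ℝ) = t • Pi.single i 1 by
        rw [← Pi.single_smul', smul_eq_mul, mul_one],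
      map_smul, smul_eq_mul, mul_comm]
  have hx : ℓ (x - Pi.single i (x i)) + c * x i = ℓ x := by
    simpa using (hline (x i)).symm
  simp only [pd3, hline]
  rw [← hx, ← deriv_comp_const_add, ← smul_eq_mul]
  exact deriv_comp_mul_left c (fun u => f (ℓ (x - Pi.single i (x i)) + u)) (x i)

theorem pd3_pd3_comp_linearMap (ℓ : (Fin 3 → ℝ) →ₗ[ℝ] ℝ) (f : ℝ → ℝ) (i : Fin 3)
    (x : Fin 3 → ℝ) :
    pd3 i (pd3 i (fun y => f (ℓ y))) x = ℓ (Pi.single i 1) ^ 2 * deriv (deriv f) (ℓ x) := by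
  have h : pd3 i (fun y => f (ℓ y)) = fun y => (fun s => ℓ (Pi.single i 1) * deriv f s) (ℓ y) :=
    funext (pd3_comp_linearMap ℓ f i)
  rw [h, pd3_comp_linearMap ℓ (fun s => ℓ (Pi.single i 1) * deriv f s), deriv_const_mul_field',
    sq, mul_assoc]

theorem deriv_deriv_linear_combination_eq_zero {𝕜 : Type*} [NontriviallyNormedField 𝕜]
    {a b c : 𝕜} {F G : 𝕜 → 𝕜} (h : ∀ s, a * F s + b * G s = c) (s : 𝕜) :
    a * deriv (deriv F) s + b * deriv (deriv G) s = 0 := by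
  have hG : (fun s => b * G s) = fun s => c - a * F s :=
    funext fun s => by linear_combination h s
  have h'' := congrArg (fun g => deriv (deriv g) s) hG
  simp only [deriv_const_mul_field', deriv_const_sub', deriv.fun_neg] at h''
  linear_combination h''

theorem sq_add_sq_mul_exp_pos {a b : ℝ} (hne : ¬(a = 0 ∧ b = 0)) (s : ℝ) :
    0 < a ^ 2 + b ^ 2 * exp s := by
  rcases not_and_or.mp hne with h | h <;> positivity

namespace GibbonsHawking

noncomputable def angle (s : ℝ) : ℝ := (1 - exp s) / (1 + exp s)

noncomputable def baseline (a b s : ℝ) : ℝ := (a ^ 2 * (1 + angle s) + b ^ 2 * (1 - angle s))⁻¹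

theorem one_add_angle (s : ℝ) : 1 + angle s = 2 / (1 + exp s) := by
  have : 1 + exp s ≠ 0 := by positivity
  rw [angle]
  field_simp
  ring

theorem one_sub_angle (s : ℝ) : 1 - angle s = exp s * (2 / (1 + exp s)) := by
  have : 1 + exp s ≠ 0 := by positivity
  rw [angle]
  field_simp
  ring

theorem baseline_eq (a b s : ℝ) :
    baseline a b s = (2 / (1 + exp s))⁻¹ * (a ^ 2 + b ^ 2 * exp s)⁻¹ := by
  rw [baseline, one_add_angle, one_sub_angle, ← mul_inv]
  ring_nf

theorem one_add_angle_mul_baseline (a b s : ℝ) :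
    (1 + angle s) * baseline a b s = (a ^ 2 + b ^ 2 * exp s)⁻¹ := by
  have : 2 / (1 + exp s) ≠ 0 := by positivity
  rw [baseline_eq, one_add_angle, mul_inv_cancel_left₀ this]

theorem one_sub_angle_mul_baseline (a b s : ℝ) :
    (1 - angle s) * baseline a b s = exp s * (a ^ 2 + b ^ 2 * exp s)⁻¹ := by
  have : 2 / (1 + exp s) ≠ 0 := by positivity
  rw [baseline_eq, one_sub_angle, mul_assoc, mul_inv_cancel_left₀ this]

end GibbonsHawking

open GibbonsHawking in
/-- (Lemma 5.1.) The baseline solution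
`W̃ = (a₊²(1+p) + a₋²(1-p))⁻¹` satisfies the linear elliptic equation
`W̃₁₁ + (1/2)((1+p)W̃)₊₊ + (1/2)((1-p)W̃)₋₋ = 0` at every point of `ℝ³`. -/
theorem baseline_solution (ap am : ℝ) (hne : ¬(ap = 0 ∧ am = 0))
    (Φ p Wt : (Fin 3 → ℝ) → ℝ)
    (hΦ : ∀ x, Φ x = ap * x 1 + am * x 2)
    (hp : ∀ x, p x = (1 - Real.exp (Φ x)) / (1 + Real.exp (Φ x)))
    (hWt : ∀ x, Wt x = (ap ^ 2 * (1 + p x) + am ^ 2 * (1 - p x))⁻¹) :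
    ∀ x : Fin 3 → ℝ,
      pd3 0 (pd3 0 Wt) x
        + (1 / 2) * pd3 1 (pd3 1 (fun y => (1 + p y) * Wt y)) x
        + (1 / 2) * pd3 2 (pd3 2 (fun y => (1 - p y) * Wt y)) x = 0 := by
  intro x
  set ℓ : (Fin 3 → ℝ) →ₗ[ℝ] ℝ := ap • LinearMap.proj 1 + am • LinearMap.proj 2
  have hℓ : ℓ (Pi.single 0 1) = 0 ∧ ℓ (Pi.single 1 1) = ap ∧ ℓ (Pi.single 2 1) = am := by
    simp [ℓ]
  have hpℓ : ∀ y, p y = angle (ℓ y) := fun y => by simp [hp, hΦ, angle, ℓ]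
  have hW : Wt = fun y => baseline ap am (ℓ y) := funext fun y => by rw [hWt, hpℓ, baseline]
  set F : ℝ → ℝ := fun s => (ap ^ 2 + am ^ 2 * exp s)⁻¹
  set G : ℝ → ℝ := fun s => exp s * F s
  have hplus : (fun y => (1 + p y) * Wt y) = fun y => F (ℓ y) := by
    simp only [hW, hpℓ, one_add_angle_mul_baseline, F]
  have hminus : (fun y => (1 - p y) * Wt y) = fun y => G (ℓ y) := by
    simp only [hW, hpℓ, one_sub_angle_mul_baseline, G, F]
  have hsum : ∀ s, ap ^ 2 * F s + am ^ 2 * G s = 1 := fun s => by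
    have := (sq_add_sq_mul_exp_pos hne s).ne'
    simp only [G, F]
    field_simp
  rw [hplus, hminus, hW, pd3_pd3_comp_linearMap, pd3_pd3_comp_linearMap ℓ F,
    pd3_pd3_comp_linearMap ℓ G, hℓ.1, hℓ.2.1, hℓ.2.2]
  linear_combination (1 / 2) * deriv_deriv_linear_combination_eq_zero hsum (ℓ x)
end

section
/- At every point of ℝ³ the conformal factor identities W̃·(ψ(1+p))₊ = 2ψ·(W̃(1+p))₊ and W̃·(ψ(1−p))₋ = 2ψ·(W̃(1−p))₋ hold. (This is the key computational identity in the proof of Proposition 6.1.) -/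
/-!
With `E = exp Φ = exp (a₊μ₊) · exp (a₋μ₋)` one has `1 + p = 2 / (1 + E)` and
`1 - p = 2E / (1 + E)`, hence `ψ = 2W̃²B / (1 + E)` with `B = exp (a₋μ₋)`, that is
`ψ = B · W̃ · (W̃(1+p)) = exp (-a₊μ₊) · W̃ · (W̃(1-p))`.
So in each identity `ψ = c W̃ G` with `G = W̃(1±p)` and `c` constant along the direction of
differentiation; then `ψ(1±p) = c G²`, and the chain rule gives `W̃ (c G²)' = 2 c W̃ G G' = 2 ψ G'`.
-/

open Real Function

lemma one_add_one_sub_exp_div_one_add_exp (s : ℝ) :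
    1 + (1 - exp s) / (1 + exp s) = 2 / (1 + exp s) := by
  field_simp; ring

lemma one_sub_one_sub_exp_div_one_add_exp (s : ℝ) :
    1 - (1 - exp s) / (1 + exp s) = 2 * exp s / (1 + exp s) := by
  field_simp; ring

lemma sq_mul_add_sq_mul_pos {a b u v : ℝ} (hab : ¬(a = 0 ∧ b = 0)) (hu : 0 < u) (hv : 0 < v) :
    0 < a ^ 2 * u + b ^ 2 * v := by
  rcases not_and_or.mp hab with ha | hb
  · have := sq_pos_of_ne_zero ha
    positivity
  · have := sq_pos_of_ne_zero hb
    positivity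

lemma differentiableAt_comp_update {ι : Type*} [Fintype ι] [DecidableEq ι] {F : (ι → ℝ) → ℝ}
    (hF : Differentiable ℝ F) (i : ι) (x : ι → ℝ) :
    DifferentiableAt ℝ (fun t => F (update x i t)) (x i) :=
  hF.differentiableAt.comp _ (hasDerivAt_update x i (x i)).differentiableAt

theorem mul_pd3_mul_eq_two_mul_mul_pd3 (i : Fin 3) (x : Fin 3 → ℝ) {ψ W q c : (Fin 3 → ℝ) → ℝ}
    (hc : ∀ t, c (update x i t) = c x) (hψ : ∀ y, ψ y = c y * W y * (W y * q y))
    (hG : DifferentiableAt ℝ (fun t => W (update x i t) * q (update x i t)) (x i)) :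
    W x * pd3 i (fun y => ψ y * q y) x = 2 * ψ x * pd3 i (fun y => W y * q y) x := by
  have hline : (fun t => ψ (update x i t) * q (update x i t))
      = fun t => c x * (W (update x i t) * q (update x i t)) ^ 2 := by
    funext t; rw [hψ, hc]; ring
  rw [pd3, pd3, hline, ((hG.hasDerivAt.fun_pow 2).const_mul (c x)).deriv, hψ x]
  simp only [update_eq_self]
  ring

lemma differentiable_one_sub_exp_div_one_add_exp :
    Differentiable ℝ fun s => (1 - exp s) / (1 + exp s) :=
  (by fun_prop : Differentiable ℝ fun s => 1 - exp s).div (by fun_prop) fun s => by positivity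

/-- (Key identity in the proof of Proposition 6.1.) At every point of
`ℝ³` one has `W̃·(ψ(1+p))₊ = 2ψ·(W̃(1+p))₊` and `W̃·(ψ(1-p))₋ = 2ψ·(W̃(1-p))₋`. -/
theorem conformal_factor_identities (ap am : ℝ) (hne : ¬(ap = 0 ∧ am = 0))
    (Φ p Wt ψ : (Fin 3 → ℝ) → ℝ)
    (hΦ : ∀ x, Φ x = ap * x 1 + am * x 2)
    (hp : ∀ x, p x = (1 - Real.exp (Φ x)) / (1 + Real.exp (Φ x)))
    (hWt : ∀ x, Wt x = (ap ^ 2 * (1 + p x) + am ^ 2 * (1 - p x))⁻¹)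
    (hψ : ∀ x, ψ x = 2 * (Wt x) ^ 2 / (Real.exp (ap * x 1) + Real.exp (-(am * x 2)))) :
    ∀ x : Fin 3 → ℝ,
      Wt x * pd3 1 (fun y => ψ y * (1 + p y)) x
        = 2 * ψ x * pd3 1 (fun y => Wt y * (1 + p y)) x ∧
      Wt x * pd3 2 (fun y => ψ y * (1 - p y)) x
        = 2 * ψ x * pd3 2 (fun y => Wt y * (1 - p y)) x := by
  have hp_diff : Differentiable ℝ p := by
    rw [funext hp, funext hΦ]
    exact differentiable_one_sub_exp_div_one_add_exp.comp (by fun_prop)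
  have hWt_diff : Differentiable ℝ Wt := by
    rw [funext hWt]
    refine Differentiable.inv (by fun_prop) fun y => (sq_mul_add_sq_mul_pos hne ?_ ?_).ne'
    · rw [hp, one_add_one_sub_exp_div_one_add_exp]; positivity
    · rw [hp, one_sub_one_sub_exp_div_one_add_exp]; positivity
  have hψ_plus : ∀ y, ψ y = exp (am * y 2) * Wt y * (Wt y * (1 + p y)) := fun y => by
    rw [hψ, hp, one_add_one_sub_exp_div_one_add_exp, hΦ, exp_add, exp_neg]
    field_simp
    ring
  have hψ_minus : ∀ y, ψ y = (exp (ap * y 1))⁻¹ * Wt y * (Wt y * (1 - p y)) := fun y => by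
    rw [hψ, hp, one_sub_one_sub_exp_div_one_add_exp, hΦ, exp_add, exp_neg]
    field_simp
    ring
  intro x
  exact ⟨mul_pd3_mul_eq_two_mul_mul_pd3 1 x (by simp) hψ_plus
      (differentiableAt_comp_update (F := fun y => Wt y * (1 + p y)) (by fun_prop) 1 x),
    mul_pd3_mul_eq_two_mul_mul_pd3 2 x (by simp) hψ_minus
      (differentiableAt_comp_update (F := fun y => Wt y * (1 - p y)) (by fun_prop) 2 x)⟩
end

section
/- Let γ : [0,1) → U be a continuously differentiable curve whose length L := ∫₀¹ ‖γ'(t)‖ dt is finite, and suppose W is unbounded along γ, i.e. there is a sequence tₙ → 1 with W(γ(tₙ)) → ∞. Then W(γ(0))^(−1/2) ≤ (C/2)·L; equivalently 1 ≤ (C·L/2)²·W(γ(0)), and in particular if L > 0 then W(γ(0)) ≥ 4/(C²L²). (This is Step 2 of the proof of Proposition 5.5: a Cheng–Yau type gradient estimate forces a quantitative blow-up rate of W near the completion boundary.) -/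
/-! The gradient bound `‖DW‖ ≤ C W^(1+α)` says that `W^(-α)` changes at rate at most `α C` per
unit of arc length along any curve, since its derivative along `γ` is `-α W^(-α-1) DW(γ')`.
With `α = 1/2`, `W(γ 0)^(-1/2) - W(γ tₙ)^(-1/2)` is therefore at most `C/2` times the length of
`γ`, and the second term tends to `0` because `W(γ tₙ) → ∞`. -/

open MeasureTheory Set Filter Topology

lemma abs_mul_rpow_neg_sub_one_mul_le {x d K α : ℝ} (hα : 0 ≤ α) (hx : 0 < x)
    (hd : |d| ≤ K * x ^ (1 + α)) : |α * x ^ (-α - 1) * d| ≤ α * K := by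
  have hx' : 0 < x ^ (-α - 1) := Real.rpow_pos_of_pos hx _
  have hcancel : x ^ (-α - 1) * x ^ (1 + α) = 1 := by
    rw [← Real.rpow_add hx, show -α - 1 + (1 + α) = 0 by ring, Real.rpow_zero]
  calc |α * x ^ (-α - 1) * d| = α * x ^ (-α - 1) * |d| := by
        rw [abs_mul, abs_mul, abs_of_nonneg hα, abs_of_pos hx']
    _ ≤ α * x ^ (-α - 1) * (K * x ^ (1 + α)) := by gcongr
    _ = α * K := by linear_combination α * K * hcancel

theorem rpow_neg_sub_le_of_norm_fderiv_le {E : Type*} [NormedAddCommGroup E] [NormedSpace ℝ E]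
    {U : Set E} {W : E → ℝ} {C α : ℝ} (hα : 0 ≤ α)
    (hdiff : ∀ x ∈ U, DifferentiableAt ℝ W x) (hpos : ∀ x ∈ U, 0 < W x)
    (hgrad : ∀ x ∈ U, ‖fderiv ℝ W x‖ ≤ C * W x ^ (1 + α))
    {γ γ' : ℝ → E} {a b : ℝ} (hab : a ≤ b)
    (hγU : ∀ s ∈ Icc a b, γ s ∈ U) (hγ : ∀ s ∈ Icc a b, HasDerivAt γ (γ' s) s)
    (hint : IntegrableOn (fun s => ‖γ' s‖) (Icc a b)) :
    W (γ a) ^ (-α) - W (γ b) ^ (-α) ≤ α * C * ∫ s in a..b, ‖γ' s‖ := by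
  have hderiv : ∀ s ∈ Icc a b, HasDerivAt (fun u => -W (γ u) ^ (-α))
      (α * W (γ s) ^ (-α - 1) * fderiv ℝ W (γ s) (γ' s)) s := by
    intro s hs
    have hWγ := (hdiff _ (hγU s hs)).hasFDerivAt.comp_hasDerivAt s (hγ s hs)
    exact (hWγ.rpow_const (p := -α) (Or.inl (hpos _ (hγU s hs)).ne')).neg.congr_deriv
      (by rw [Function.comp_apply]; ring)
  have hslope : ∀ s ∈ Icc a b,
      α * W (γ s) ^ (-α - 1) * fderiv ℝ W (γ s) (γ' s) ≤ α * C * ‖γ' s‖ := by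
    intro s hs
    refine (le_abs_self _).trans ?_
    rw [mul_assoc α C]
    refine abs_mul_rpow_neg_sub_one_mul_le hα (hpos _ (hγU s hs)) ?_
    calc |fderiv ℝ W (γ s) (γ' s)| ≤ ‖fderiv ℝ W (γ s)‖ * ‖γ' s‖ :=
          (fderiv ℝ W (γ s)).le_opNorm _
      _ ≤ C * W (γ s) ^ (1 + α) * ‖γ' s‖ := by gcongr; exact hgrad _ (hγU s hs)
      _ = C * ‖γ' s‖ * W (γ s) ^ (1 + α) := by ring
  have hftc := intervalIntegral.sub_le_integral_of_hasDeriv_right_of_le hab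
    (fun s hs => (hderiv s hs).continuousAt.continuousWithinAt)
    (fun s hs => (hderiv s (Ioo_subset_Icc_self hs)).hasDerivWithinAt)
    (hint.const_mul (α * C)) (fun s hs => hslope s (Ioo_subset_Icc_self hs))
  rw [intervalIntegral.integral_const_mul] at hftc
  linarith

lemma intervalIntegral_le_setIntegral_of_Icc_subset {f : ℝ → ℝ} {s : Set ℝ} {a b : ℝ}
    (hab : a ≤ b) (hf : IntegrableOn f s) (hnonneg : ∀ x, 0 ≤ f x) (hsub : Icc a b ⊆ s) :
    ∫ x in a..b, f x ≤ ∫ x in s, f x := by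
  rw [intervalIntegral.integral_of_le hab]
  exact setIntegral_mono_set hf (ae_of_all _ fun x => hnonneg x)
    (Ioc_subset_Icc_self.trans hsub).eventuallyLE

lemma one_le_sq_mul_of_rpow_neg_half_le {w M : ℝ} (hw : 0 < w) (h : w ^ (-(1 : ℝ) / 2) ≤ M) :
    1 ≤ M ^ 2 * w := by
  rw [neg_div, Real.rpow_neg hw.le, ← Real.sqrt_eq_rpow,
    inv_le_iff_one_le_mul₀ (Real.sqrt_pos.2 hw)] at h
  calc 1 ≤ (M * √w) ^ 2 := one_le_pow₀ h
    _ = M ^ 2 * w := by rw [mul_pow, Real.sq_sqrt hw.le]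

theorem gradient_blowup_rate_general {E : Type*} [NormedAddCommGroup E] [NormedSpace ℝ E]
    (U : Set E) (C : ℝ)
    (W : E → ℝ)
    (hdiff : ∀ x ∈ U, DifferentiableAt ℝ W x)
    (hpos : ∀ x ∈ U, 0 < W x)
    (hgrad : ∀ x ∈ U, ‖fderiv ℝ W x‖ ≤ C * W x ^ ((3 : ℝ) / 2))
    (γ γ' : ℝ → E)
    (hγU : ∀ t ∈ Set.Ico (0 : ℝ) 1, γ t ∈ U)
    (hγ : ∀ t ∈ Set.Ico (0 : ℝ) 1, HasDerivAt γ (γ' t) t)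
    (hint : IntegrableOn (fun t => ‖γ' t‖) (Set.Ico (0 : ℝ) 1))
    (L : ℝ) (hL : L = ∫ t in Set.Ico (0 : ℝ) 1, ‖γ' t‖)
    (t : ℕ → ℝ) (ht : ∀ n, t n ∈ Set.Ico (0 : ℝ) 1)
    (hWblow : Filter.Tendsto (fun n => W (γ (t n))) Filter.atTop Filter.atTop) :
    W (γ 0) ^ (-(1 : ℝ) / 2) ≤ C / 2 * L ∧
    1 ≤ (C * L / 2) ^ 2 * W (γ 0) ∧
    (0 < L → 4 / (C ^ 2 * L ^ 2) ≤ W (γ 0)) := by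
  have h0 : γ 0 ∈ U := hγU 0 ⟨le_rfl, one_pos⟩
  have hgrad' : ∀ x ∈ U, ‖fderiv ℝ W x‖ ≤ C * W x ^ (1 + 1 / 2 : ℝ) := by
    rw [show (1 + 1 / 2 : ℝ) = 3 / 2 by norm_num]; exact hgrad
  have hC : 0 ≤ C := nonneg_of_mul_nonneg_left ((norm_nonneg _).trans (hgrad _ h0))
    (Real.rpow_pos_of_pos (hpos _ h0) _)
  have hstep : ∀ n, W (γ 0) ^ (-(1 : ℝ) / 2) ≤ W (γ (t n)) ^ (-(1 : ℝ) / 2) + C / 2 * L := by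
    intro n
    have hsub : Icc 0 (t n) ⊆ Ico 0 1 := Icc_subset_Ico_right (ht n).2
    have hdrop := rpow_neg_sub_le_of_norm_fderiv_le (by norm_num) hdiff hpos hgrad' (ht n).1
      (fun s hs => hγU s (hsub hs)) (fun s hs => hγ s (hsub hs)) (hint.mono_set hsub)
    have hlen := intervalIntegral_le_setIntegral_of_Icc_subset (ht n).1 hint
      (fun s => norm_nonneg (γ' s)) hsub
    rw [← hL] at hlen
    have := mul_le_mul_of_nonneg_left hlen (by positivity : 0 ≤ C / 2)
    simp only [neg_div] at hdrop ⊢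
    linarith
  have hlim : Tendsto (fun n => W (γ (t n)) ^ (-(1 : ℝ) / 2) + C / 2 * L) atTop
      (𝓝 (0 + C / 2 * L)) := by
    simp only [neg_div]
    exact ((tendsto_rpow_neg_atTop (by norm_num)).comp hWblow).add tendsto_const_nhds
  have hrate : W (γ 0) ^ (-(1 : ℝ) / 2) ≤ C / 2 * L := by
    simpa using ge_of_tendsto' hlim hstep
  have hsq : 1 ≤ (C * L / 2) ^ 2 * W (γ 0) :=
    one_le_sq_mul_of_rpow_neg_half_le (hpos _ h0) (by linarith)
  have hm : 0 < (C * L / 2) ^ 2 :=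
    (sq_nonneg _).lt_of_ne fun h => by rw [← h, zero_mul] at hsq; linarith
  refine ⟨hrate, hsq, fun _ => ?_⟩
  calc 4 / (C ^ 2 * L ^ 2) = ((C * L / 2) ^ 2)⁻¹ := by ring
    _ ≤ W (γ 0) := (inv_le_iff_one_le_mul₀' hm).2 hsq

/-- (Step 2 of the proof of Proposition 5.5.) If `W > 0` on `U` with
`‖DW‖ ≤ C·W^(3/2)`, and `γ : [0,1) → U` is a C¹ curve of finite length `L` along which
`W` blows up, then `W(γ 0)^(-1/2) ≤ (C/2)·L`; equivalently `1 ≤ (C·L/2)²·W(γ 0)`, and in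
particular if `L > 0` then `W(γ 0) ≥ 4/(C²L²)`. -/
theorem gradient_blowup_rate {E : Type*} [NormedAddCommGroup E] [NormedSpace ℝ E]
    (U : Set E) (hU : IsOpen U) (C : ℝ) (hC : 0 < C)
    (W : E → ℝ)
    (hdiff : ∀ x ∈ U, DifferentiableAt ℝ W x)
    (hpos : ∀ x ∈ U, 0 < W x)
    (hgrad : ∀ x ∈ U, ‖fderiv ℝ W x‖ ≤ C * W x ^ ((3 : ℝ) / 2))
    (γ γ' : ℝ → E)
    (hγU : ∀ t ∈ Set.Ico (0 : ℝ) 1, γ t ∈ U)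
    (hγ : ∀ t ∈ Set.Ico (0 : ℝ) 1, HasDerivAt γ (γ' t) t)
    (hγ'cont : ContinuousOn γ' (Set.Ico (0 : ℝ) 1))
    (hint : IntegrableOn (fun t => ‖γ' t‖) (Set.Ico (0 : ℝ) 1))
    (L : ℝ) (hL : L = ∫ t in Set.Ico (0 : ℝ) 1, ‖γ' t‖)
    (t : ℕ → ℝ) (ht : ∀ n, t n ∈ Set.Ico (0 : ℝ) 1)
    (htlim : Filter.Tendsto t Filter.atTop (nhds 1))
    (hWblow : Filter.Tendsto (fun n => W (γ (t n))) Filter.atTop Filter.atTop) :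
    W (γ 0) ^ (-(1 : ℝ) / 2) ≤ C / 2 * L ∧
    1 ≤ (C * L / 2) ^ 2 * W (γ 0) ∧
    (0 < L → 4 / (C ^ 2 * L ^ 2) ≤ W (γ 0)) :=
  gradient_blowup_rate_general U C W hdiff hpos hgrad γ γ' hγU hγ hint L hL t ht hWblow
end

section
/- For all u, v ∈ ℂ² one has Re Ω_I(u,v) = Re Ω_J(u,v). (This verifies, pointwise on the nondegenerate locus {z₁z₂ ≠ 0}, the compatibility condition Re(Ω_I) = Re(Ω_J) for the generalized Kähler structure on the standard Hopf surface of Example 2.5.) -/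
/-!
Writing `a = u₁/z₁`, `b = u₂/z₂` (and `c`, `d` likewise for `v`), one has `Ω_I(u,v) = ad - bc`,
`A u = ℓ_u - b̄`, `B u = ℓ_u - a`, where `ℓ_u = L u = 2(p Re a + q Re b)` with the weights
`p = |z₁|²/(|z₁|²+|z₂|²)` and `q = |z₂|²/(|z₁|²+|z₂|²)`, because `conj z * w = |z|² (w/z)`.
The imaginary parts cancel between `Re(ad) - Re(bc)` and `Re(b̄c - ad̄)`, and what remains is
linear in `ℓ_u, ℓ_v`; it matches `Re a Re d - Re b Re c` exactly because `p + q = 1`.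
-/

open ComplexConjugate

lemma Complex.conj_mul_eq_ofReal_norm_sq_mul_div (z w : ℂ) :
    conj z * w = ((‖z‖ ^ 2 : ℝ) : ℂ) * (w / z) := by
  rcases eq_or_ne z 0 with rfl | hz
  · simp
  · rw [Complex.ofReal_pow, ← Complex.conj_mul']
    field_simp

lemma Complex.re_conj_mul_add_conj_mul_div (z₁ z₂ w₁ w₂ : ℂ) :
    2 * (conj z₁ * w₁ + conj z₂ * w₂).re / (‖z₁‖ ^ 2 + ‖z₂‖ ^ 2) =
      2 * (‖z₁‖ ^ 2 / (‖z₁‖ ^ 2 + ‖z₂‖ ^ 2) * (w₁ / z₁).re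
        + ‖z₂‖ ^ 2 / (‖z₁‖ ^ 2 + ‖z₂‖ ^ 2) * (w₂ / z₂).re) := by
  rw [Complex.conj_mul_eq_ofReal_norm_sq_mul_div, Complex.conj_mul_eq_ofReal_norm_sq_mul_div,
    Complex.add_re, Complex.re_ofReal_mul, Complex.re_ofReal_mul]
  ring

lemma Complex.re_mul_sub_mul_eq_re_shifted_wedge {p q : ℝ} (hpq : p + q = 1) (a b c d : ℂ)
    {ℓu ℓv : ℝ} (hℓu : ℓu = 2 * (p * a.re + q * b.re)) (hℓv : ℓv = 2 * (p * c.re + q * d.re)) :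
    (a * d - b * c).re = ((ℓu - conj b) * (ℓv - c) - (ℓv - conj d) * (ℓu - a)).re := by
  subst hℓu hℓv
  simp only [Complex.sub_re, Complex.mul_re, Complex.sub_im, Complex.ofReal_re,
    Complex.ofReal_im, Complex.conj_re, Complex.conj_im]
  linear_combination (-2 * (a.re * d.re - b.re * c.re)) * hpq

theorem hopf_re_compat_general (z1 z2 : ℂ) (hz1 : z1 ≠ 0)
    (ΩI ΩJ : ℂ × ℂ → ℂ × ℂ → ℂ)
    (hΩI : ∀ u v : ℂ × ℂ, ΩI u v = (u.1 * v.2 - u.2 * v.1) / (z1 * z2))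
    (L : ℂ × ℂ → ℝ)
    (hL : ∀ u : ℂ × ℂ, L u =
      2 * ((starRingEnd ℂ) z1 * u.1 + (starRingEnd ℂ) z2 * u.2).re
        / (‖z1‖ ^ 2 + ‖z2‖ ^ 2))
    (A B : ℂ × ℂ → ℂ)
    (hA : ∀ u : ℂ × ℂ, A u = (L u : ℂ) - (starRingEnd ℂ) u.2 / (starRingEnd ℂ) z2)
    (hB : ∀ u : ℂ × ℂ, B u = (L u : ℂ) - u.1 / z1)
    (hΩJ : ∀ u v : ℂ × ℂ, ΩJ u v = A u * B v - A v * B u) :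
    ∀ u v : ℂ × ℂ, (ΩI u v).re = (ΩJ u v).re := by
  intro u v
  have hS : ‖z1‖ ^ 2 + ‖z2‖ ^ 2 ≠ 0 := by
    have : 0 < ‖z1‖ := norm_pos_iff.mpr hz1
    positivity
  have hΩI' : ΩI u v = u.1 / z1 * (v.2 / z2) - u.2 / z2 * (v.1 / z1) := by
    rw [hΩI]
    ring
  have hL' (w : ℂ × ℂ) : L w = 2 * (‖z1‖ ^ 2 / (‖z1‖ ^ 2 + ‖z2‖ ^ 2) * (w.1 / z1).re
      + ‖z2‖ ^ 2 / (‖z1‖ ^ 2 + ‖z2‖ ^ 2) * (w.2 / z2).re) := by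
    rw [hL, Complex.re_conj_mul_add_conj_mul_div]
  rw [hΩI', hΩJ, hA, hA, hB, hB, ← map_div₀, ← map_div₀]
  exact Complex.re_mul_sub_mul_eq_re_shifted_wedge (by field_simp) _ _ _ _ (hL' u) (hL' v)

/-- (Example 2.5, standard Hopf surface.) Pointwise on the
nondegenerate locus `{z₁z₂ ≠ 0}`, the compatibility condition `Re Ω_I = Re Ω_J`
holds for the holomorphic symplectic forms of the generalized Kähler structure. -/
theorem hopf_re_compat (z1 z2 : ℂ) (hz1 : z1 ≠ 0) (hz2 : z2 ≠ 0)
    (ΩI ΩJ : ℂ × ℂ → ℂ × ℂ → ℂ)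
    (hΩI : ∀ u v : ℂ × ℂ, ΩI u v = (u.1 * v.2 - u.2 * v.1) / (z1 * z2))
    (L : ℂ × ℂ → ℝ)
    (hL : ∀ u : ℂ × ℂ, L u =
      2 * ((starRingEnd ℂ) z1 * u.1 + (starRingEnd ℂ) z2 * u.2).re
        / (‖z1‖ ^ 2 + ‖z2‖ ^ 2))
    (A B : ℂ × ℂ → ℂ)
    (hA : ∀ u : ℂ × ℂ, A u = (L u : ℂ) - (starRingEnd ℂ) u.2 / (starRingEnd ℂ) z2)
    (hB : ∀ u : ℂ × ℂ, B u = (L u : ℂ) - u.1 / z1)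
    (hΩJ : ∀ u v : ℂ × ℂ, ΩJ u v = A u * B v - A v * B u) :
    ∀ u v : ℂ × ℂ, (ΩI u v).re = (ΩJ u v).re :=
  hopf_re_compat_general z1 z2 hz1 ΩI ΩJ hΩI L hL A B hA hB hΩJ
end

section
/- For every v ∈ ℂ²: Ω_I(X(z), v) = dμ₁(v) − i·dμ₂(v) and Ω_J(X(z), v) = dμ₁(v) − i·dμ₃(v), where dμ₁(v) := Im(v₁/z₁) − Im(v₂/z₂), dμ₂(v) := Re(v₁/z₁) − Re(v₂/z₂), and dμ₃(v) := Re(v₁/z₁) + Re(v₂/z₂) − 4·Re(conj(z₁)·v₁ + conj(z₂)·v₂)/(|z₁|² + |z₂|²). (These are the differentials of the moment map components μ₁ = arg z₁ − arg z₂, μ₂ = log(|z₁|/|z₂|), μ₃ = log(|z₁z₂|/(|z₁|²+|z₂|²)²) computed in Example 3.6 for the standard Hopf surface.) -/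
/-! With `a = v₁/z₁`, `b = v₂/z₂` one finds `Ω_I(X, v) = -i(a - b)`, and, since `L(X) = 0`,
`A(X) = i`, `B(X) = -i`, also `Ω_J(X, v) = i(A v + B v) = -i(a + conj b) + 2i·L(v)`; both sides
then match via `-(i w) = Im w - i Re w`. -/

open Complex ComplexConjugate

namespace Complex

theorem ofReal_im_sub_I_mul_ofReal_re (w : ℂ) : (w.im : ℂ) - I * w.re = -(I * w) := by
  apply Complex.ext <;> simp

theorem re_conj_mul_I_mul (z : ℂ) : (conj z * (I * z)).re = 0 := by
  rw [mul_left_comm, ← normSq_eq_conj_mul_self]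
  simp

end Complex

/-- (Example 3.6, standard Hopf surface.) Contracting the holomorphic
symplectic forms with the generator `X(z) = (i z₁, i z₂)` of the diagonal `S¹`-action
gives the differentials of the moment map components:
`Ω_I(X, ·) = dμ₁ - i dμ₂` and `Ω_J(X, ·) = dμ₁ - i dμ₃`. -/
theorem hopf_moment_map_differentials (z1 z2 : ℂ) (hz1 : z1 ≠ 0) (hz2 : z2 ≠ 0)
    (X : ℂ × ℂ) (hX : X = (Complex.I * z1, Complex.I * z2))
    (ΩI ΩJ : ℂ × ℂ → ℂ × ℂ → ℂ)
    (hΩI : ∀ u v : ℂ × ℂ, ΩI u v = (u.1 * v.2 - u.2 * v.1) / (z1 * z2))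
    (L : ℂ × ℂ → ℝ)
    (hL : ∀ u : ℂ × ℂ, L u =
      2 * ((starRingEnd ℂ) z1 * u.1 + (starRingEnd ℂ) z2 * u.2).re
        / (‖z1‖ ^ 2 + ‖z2‖ ^ 2))
    (A B : ℂ × ℂ → ℂ)
    (hA : ∀ u : ℂ × ℂ, A u = (L u : ℂ) - (starRingEnd ℂ) u.2 / (starRingEnd ℂ) z2)
    (hB : ∀ u : ℂ × ℂ, B u = (L u : ℂ) - u.1 / z1)
    (hΩJ : ∀ u v : ℂ × ℂ, ΩJ u v = A u * B v - A v * B u)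
    (dmu1 dmu2 dmu3 : ℂ × ℂ → ℝ)
    (hdmu1 : ∀ v : ℂ × ℂ, dmu1 v = (v.1 / z1).im - (v.2 / z2).im)
    (hdmu2 : ∀ v : ℂ × ℂ, dmu2 v = (v.1 / z1).re - (v.2 / z2).re)
    (hdmu3 : ∀ v : ℂ × ℂ, dmu3 v = (v.1 / z1).re + (v.2 / z2).re
      - 4 * ((starRingEnd ℂ) z1 * v.1 + (starRingEnd ℂ) z2 * v.2).re
        / (‖z1‖ ^ 2 + ‖z2‖ ^ 2)) :
    ∀ v : ℂ × ℂ,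
      ΩI X v = (dmu1 v : ℂ) - Complex.I * (dmu2 v : ℂ) ∧
      ΩJ X v = (dmu1 v : ℂ) - Complex.I * (dmu3 v : ℂ) := by
  intro v
  subst hX
  have hLX : L (I * z1, I * z2) = 0 := by
    rw [hL, add_re, re_conj_mul_I_mul, re_conj_mul_I_mul]
    simp
  have hAX : A (I * z1, I * z2) = I := by
    rw [hA, hLX]
    field_simp [(map_ne_zero conj).2 hz2]
    simp
  have hBX : B (I * z1, I * z2) = -I := by
    rw [hB, hLX]
    field_simp
    simp
  have hdmu3L : dmu3 v = (v.1 / z1).re + (v.2 / z2).re - 2 * L v := by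
    rw [hdmu3, hL]
    ring
  have hconj : -((v.2 / z2).im : ℂ) - I * (v.2 / z2).re = -(I * conj (v.2 / z2)) := by
    rw [← ofReal_im_sub_I_mul_ofReal_re, conj_im, conj_re, ofReal_neg]
  constructor
  · rw [hΩI, hdmu1, hdmu2, show (I * z1 * v.2 - I * z2 * v.1) / (z1 * z2)
      = I * (v.2 / z2 - v.1 / z1) by field_simp]
    push_cast
    linear_combination ofReal_im_sub_I_mul_ofReal_re (v.2 / z2)
      - ofReal_im_sub_I_mul_ofReal_re (v.1 / z1)
  · rw [hΩJ, hAX, hBX, hA, hB, hdmu1, hdmu3L, ← map_div₀]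
    push_cast
    linear_combination -ofReal_im_sub_I_mul_ofReal_re (v.1 / z1) - hconj
end
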